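/- The Z-linear map T(k,m,n) → U^3 ⊕ E_8(-1)^2 defined on the standard basis δ_1,...,δ_5 by δ_1 ↦ e_1^1 + k e_2^1 + θ_k, δ_2 ↦ e_1^1, δ_3 ↦ e_1^2 + m e_2^3, δ_4 ↦ e_1^3, δ_5 ↦ θ_n, where θ_k is a primitive vector of square -2k in the first copy of E_8(-1) and θ_n is a primitive vector of square -2n in the second copy, is an isometric embedding of T(k,m,n) into the K3 lattice Λ = U^3 ⊕ E_8(-1)^2, and the image is a primitive sublattice. -/

import Mathlib

/-- The Cartan matrix of E₈ (Bourbaki numbering). -/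
def cartanE8 : Matrix (Fin 8) (Fin 8) ℤ :=
  !![2, 0, -1, 0, 0, 0, 0, 0;
     0, 2, 0, -1, 0, 0, 0, 0;
     -1, 0, 2, -1, 0, 0, 0, 0;
     0, -1, -1, 2, -1, 0, 0, 0;
     0, 0, 0, -1, 2, -1, 0, 0;
     0, 0, 0, 0, -1, 2, -1, 0;
     0, 0, 0, 0, 0, -1, 2, -1;
     0, 0, 0, 0, 0, 0, -1, 2]

/-- The bilinear form of E₈(-1) on ℤ⁸. -/
def bE8 (x y : Fin 8 → ℤ) : ℤ := -(dotProduct x (cartanE8.mulVec y))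

/-- The bilinear form of T(k,m,n) = U(k) ⊕ U(m) ⊕ ⟨-2n⟩ on ℤ⁵. -/
def bT (k m n : ℕ) (x y : Fin 5 → ℤ) : ℤ :=
  (k : ℤ) * (x 0 * y 1 + x 1 * y 0) + (m : ℤ) * (x 2 * y 3 + x 3 * y 2)
    - 2 * (n : ℤ) * (x 4 * y 4)

/-- The bilinear form of the K3 lattice Λ = U³ ⊕ E₈(-1)², with U³ coordinates
(e₁¹,e₂¹,e₁²,e₂²,e₁³,e₂³). -/
def bLambda (x y : (Fin 6 → ℤ) × (Fin 8 → ℤ) × (Fin 8 → ℤ)) : ℤ :=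
  (x.1 0 * y.1 1 + x.1 1 * y.1 0 + x.1 2 * y.1 3 + x.1 3 * y.1 2
    + x.1 4 * y.1 5 + x.1 5 * y.1 4) + bE8 x.2.1 y.2.1 + bE8 x.2.2 y.2.2

lemma vec6_apply (a0 a1 a2 a3 a4 a5 : ℤ) :
    (![a0,a1,a2,a3,a4,a5] : Fin 6 → ℤ) 0 = a0 ∧
    (![a0,a1,a2,a3,a4,a5] : Fin 6 → ℤ) 1 = a1 ∧
    (![a0,a1,a2,a3,a4,a5] : Fin 6 → ℤ) 2 = a2 ∧
    (![a0,a1,a2,a3,a4,a5] : Fin 6 → ℤ) 3 = a3 ∧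
    (![a0,a1,a2,a3,a4,a5] : Fin 6 → ℤ) 4 = a4 ∧
    (![a0,a1,a2,a3,a4,a5] : Fin 6 → ℤ) 5 = a5 :=
  ⟨rfl, rfl, rfl, rfl, rfl, rfl⟩

lemma funext6 {f g : Fin 6 → ℤ} (h0 : f 0 = g 0) (h1 : f 1 = g 1) (h2 : f 2 = g 2)
    (h3 : f 3 = g 3) (h4 : f 4 = g 4) (h5 : f 5 = g 5) : f = g := by
  funext i
  fin_cases i
  exacts [h0, h1, h2, h3, h4, h5]

lemma bE8_smul_smul (a b : ℤ) (u v : Fin 8 → ℤ) :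
    bE8 (a • u) (b • v) = a * b * bE8 u v := by
  rw [bE8, bE8, Matrix.mulVec_smul, smul_dotProduct, dotProduct_smul,
    smul_eq_mul, smul_eq_mul]
  ring

lemma bE8_zero : bE8 0 0 = 0 := by
  simp [bE8]

/-- The auxiliary linear map. -/
def phiMap (k m : ℕ) (θk θn : Fin 8 → ℤ) :
    (Fin 5 → ℤ) →ₗ[ℤ] ((Fin 6 → ℤ) × (Fin 8 → ℤ) × (Fin 8 → ℤ)) where
  toFun x := (![x 0 + x 1, (k : ℤ) * x 0, x 2, 0, x 3, (m : ℤ) * x 2],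
               x 0 • θk, x 4 • θn)
  map_add' x y := by
    refine Prod.ext ?_ (Prod.ext ?_ ?_)
    · funext i
      fin_cases i <;> simp <;> ring
    · simp [add_smul]
    · simp [add_smul]
  map_smul' c x := by
    refine Prod.ext ?_ (Prod.ext ?_ ?_)
    · funext i
      fin_cases i <;> simp [smul_eq_mul] <;> ring
    · show (c * x 0) • θk = c • (x 0 • θk)
      rw [smul_smul]
    · show (c * x 4) • θn = c • (x 4 • θn)
      rw [smul_smul]

/-- Given primitive vectors θₖ, θₙ of squares -2k, -2n in the two copies of
E₈(-1), the map δ₁ ↦ e₁¹ + k·e₂¹ + θₖ, δ₂ ↦ e₁¹, δ₃ ↦ e₁² + m·e₂³,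
δ₄ ↦ e₁³, δ₅ ↦ θₙ is an isometric embedding of T(k,m,n) into the K3 lattice
Λ = U³ ⊕ E₈(-1)² with primitive image. -/
theorem primitive_embedding_T_kmn_into_K3_lattice (k m n : ℕ)
    (hk : 0 < k) (hm : 0 < m) (hn : 0 < n)
    (θk θn : Fin 8 → ℤ)
    (hθk : bE8 θk θk = -(2 * (k : ℤ)))
    (hθkprim : NoZeroSMulDivisors ℤ ((Fin 8 → ℤ) ⧸ Submodule.span ℤ {θk}))
    (hθn : bE8 θn θn = -(2 * (n : ℤ)))
    (hθnprim : NoZeroSMulDivisors ℤ ((Fin 8 → ℤ) ⧸ Submodule.span ℤ {θn})) :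
    ∃ φ : (Fin 5 → ℤ) →ₗ[ℤ] ((Fin 6 → ℤ) × (Fin 8 → ℤ) × (Fin 8 → ℤ)),
      (∀ x : Fin 5 → ℤ,
        φ x = (![x 0 + x 1, (k : ℤ) * x 0, x 2, 0, x 3, (m : ℤ) * x 2],
               x 0 • θk, x 4 • θn)) ∧
      Function.Injective φ ∧
      (∀ x y : Fin 5 → ℤ, bLambda (φ x) (φ y) = bT k m n x y) ∧
      NoZeroSMulDivisors ℤ
        (((Fin 6 → ℤ) × (Fin 8 → ℤ) × (Fin 8 → ℤ)) ⧸ LinearMap.range φ) := by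
  have hθk_ne : θk ≠ 0 := by
    intro h
    rw [h, bE8_zero] at hθk
    omega
  have hθn_ne : θn ≠ 0 := by
    intro h
    rw [h, bE8_zero] at hθn
    omega
  refine ⟨phiMap k m θk θn, fun x => rfl, ?_, ?_, ?_⟩
  · -- injectivity
    rw [injective_iff_map_eq_zero]
    intro x hx
    have h1 := congrArg Prod.fst hx
    have h3 := congrArg (fun p => p.2.2) hx
    simp only [phiMap, LinearMap.coe_mk, AddHom.coe_mk, Prod.fst_zero] at h1 h3
    have e0 : x 0 + x 1 = 0 := congrFun h1 0
    have e1 : (k : ℤ) * x 0 = 0 := congrFun h1 1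
    have e2 : x 2 = 0 := congrFun h1 2
    have e3 : x 3 = 0 := congrFun h1 4
    have e4 : x 4 = 0 := by
      have : x 4 • θn = 0 := h3
      rcases smul_eq_zero.mp this with h | h
      · exact h
      · exact absurd h hθn_ne
    have hx0 : x 0 = 0 := by
      have hk' : (k : ℤ) ≠ 0 := by exact_mod_cast hk.ne'
      exact (mul_eq_zero.mp e1).resolve_left hk'
    funext i
    fin_cases i <;> simp_all <;> omega
  · -- isometry
    intro x y
    show bLambda (![x 0 + x 1, (k : ℤ) * x 0, x 2, 0, x 3, (m : ℤ) * x 2],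
          x 0 • θk, x 4 • θn)
        (![y 0 + y 1, (k : ℤ) * y 0, y 2, 0, y 3, (m : ℤ) * y 2],
          y 0 • θk, y 4 • θn) = bT k m n x y
    obtain ⟨p0, p1, p2, p3, p4, p5⟩ := vec6_apply (x 0 + x 1) ((k:ℤ) * x 0) (x 2) 0 (x 3) ((m:ℤ) * x 2)
    obtain ⟨q0, q1, q2, q3, q4, q5⟩ := vec6_apply (y 0 + y 1) ((k:ℤ) * y 0) (y 2) 0 (y 3) ((m:ℤ) * y 2)
    simp only [bLambda, bE8_smul_smul, hθk, hθn, bT, p0, p1, p2, p3, p4, p5,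
      q0, q1, q2, q3, q4, q5]
    ring
  · -- primitivity
    refine ⟨fun {c q} h => ?_⟩
    by_cases hc : c = 0
    · exact Or.inl hc
    refine Or.inr ?_
    obtain ⟨v, rfl⟩ := Submodule.Quotient.mk_surjective _ q
    rw [← Submodule.Quotient.mk_smul] at h
    rw [Submodule.Quotient.mk_eq_zero] at h ⊢
    obtain ⟨x, hx⟩ := h
    -- component equations
    have h1 : (![x 0 + x 1, (k : ℤ) * x 0, x 2, 0, x 3, (m : ℤ) * x 2]
        : Fin 6 → ℤ) = c • v.1 := congrArg Prod.fst hx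
    have h2 : x 0 • θk = c • v.2.1 := congrArg (fun p => p.2.1) hx
    have h3 : x 4 • θn = c • v.2.2 := congrArg (fun p => p.2.2) hx
    -- use primitivity of θk
    have hvk : ∃ a : ℤ, v.2.1 = a • θk := by
      have : (c • (Submodule.Quotient.mk v.2.1 :
          (Fin 8 → ℤ) ⧸ Submodule.span ℤ {θk})) = 0 := by
        rw [← Submodule.Quotient.mk_smul, ← h2, Submodule.Quotient.mk_eq_zero]
        exact Submodule.smul_mem _ _ (Submodule.mem_span_singleton_self θk)
      rcases smul_eq_zero.mp this with h | h
      · exact absurd h hc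
      · rw [Submodule.Quotient.mk_eq_zero, Submodule.mem_span_singleton] at h
        obtain ⟨a, ha⟩ := h
        exact ⟨a, ha.symm⟩
    have hvn : ∃ b : ℤ, v.2.2 = b • θn := by
      have : (c • (Submodule.Quotient.mk v.2.2 :
          (Fin 8 → ℤ) ⧸ Submodule.span ℤ {θn})) = 0 := by
        rw [← Submodule.Quotient.mk_smul, ← h3, Submodule.Quotient.mk_eq_zero]
        exact Submodule.smul_mem _ _ (Submodule.mem_span_singleton_self θn)
      rcases smul_eq_zero.mp this with h | h
      · exact absurd h hc
      · rw [Submodule.Quotient.mk_eq_zero, Submodule.mem_span_singleton] at h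
        obtain ⟨b, hb⟩ := h
        exact ⟨b, hb.symm⟩
    obtain ⟨a, ha⟩ := hvk
    obtain ⟨b, hb⟩ := hvn
    have hx0 : x 0 = c * a := by
      have : x 0 • θk = (c * a) • θk := by rw [h2, ha, smul_smul]
      exact smul_left_injective ℤ hθk_ne this
    have hx4 : x 4 = c * b := by
      have : x 4 • θn = (c * b) • θn := by rw [h3, hb, smul_smul]
      exact smul_left_injective ℤ hθn_ne this
    have e0 : x 0 + x 1 = c * v.1 0 := by
      have := congrFun h1 0; simpa using this
    have e1 : (k : ℤ) * x 0 = c * v.1 1 := by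
      have := congrFun h1 1; simpa using this
    have e2 : x 2 = c * v.1 2 := by
      have := congrFun h1 2; simpa using this
    have e3 : (0 : ℤ) = c * v.1 3 := by
      have := congrFun h1 3; simpa using this
    have e4 : x 3 = c * v.1 4 := by
      have := congrFun h1 4; simpa using this
    have e5 : (m : ℤ) * x 2 = c * v.1 5 := by
      have := congrFun h1 5; simpa using this
    refine ⟨![a, v.1 0 - a, v.1 2, v.1 4, b], ?_⟩
    refine Prod.ext (funext6 ?_ ?_ ?_ ?_ ?_ ?_) (Prod.ext ha.symm hb.symm)
    · show a + (v.1 0 - a) = v.1 0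
      ring
    · show (k : ℤ) * a = v.1 1
      apply mul_left_cancel₀ hc
      rw [← e1, hx0]; ring
    · show v.1 2 = v.1 2
      rfl
    · show (0 : ℤ) = v.1 3
      apply mul_left_cancel₀ hc
      rw [← e3]; ring
    · show v.1 4 = v.1 4
      rfl
    · show (m : ℤ) * v.1 2 = v.1 5
      apply mul_left_cancel₀ hc
      rw [← e5, e2]; ring
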